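/- Fix x^(0) ∈ ℝ^n and define the sequence x^(t) = iso_{i_t}(x^(t-1)) where i_t = 1 + ((t−1) mod (n−1)). Then x^(t) converges to iso(x^(0)) as t → ∞. -/

import Mathlib

open MeasureTheory Filter ProbabilityTheory

noncomputable section

/-- The isotonic (monotone nondecreasing) cone in `ℝ^n` with the Euclidean norm. -/
def monoCone (n : ℕ) : Set (EuclideanSpace ℝ (Fin n)) :=
  {v | ∀ i j : Fin n, i ≤ j → v i ≤ v j}

open Classical in
/-- Euclidean projection onto the monotone cone (chosen minimizer of the distance). -/
def isoProj {n : ℕ} (x : EuclideanSpace ℝ (Fin n)) : EuclideanSpace ℝ (Fin n) :=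
  if h : ∃ z ∈ monoCone n, ∀ w ∈ monoCone n, dist x z ≤ dist x w then h.choose else x

/-- The map `A_i` replacing entries `i` and `i+1` (0-based) by their common average. -/
def avgMap {n : ℕ} (i : ℕ) (x : EuclideanSpace ℝ (Fin n)) : EuclideanSpace ℝ (Fin n) :=
  WithLp.toLp 2 fun j => if h : i + 1 < n then
      (if (j : ℕ) = i ∨ (j : ℕ) = i + 1
        then (x ⟨i, by omega⟩ + x ⟨i + 1, h⟩) / 2 else x j)
    else x j

/-- One step of neighbor pooling: average entries `i`, `i+1` if they violate monotonicity. -/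
def isoStep {n : ℕ} (i : ℕ) (x : EuclideanSpace ℝ (Fin n)) : EuclideanSpace ℝ (Fin n) :=
  if h : i + 1 < n then
    (if x ⟨i, by omega⟩ ≤ x ⟨i + 1, h⟩ then x else avgMap i x)
  else x

/-- Nonincreasing under neighbor averaging. -/
def NUNA {n : ℕ} (N : Seminorm ℝ (EuclideanSpace ℝ (Fin n))) : Prop :=
  ∀ x : EuclideanSpace ℝ (Fin n), ∀ i : ℕ, i + 1 < n → N (avgMap i x) ≤ N x

/-- Average of the `m` entries of `x` starting at (0-based) index `a`. -/
def wavg {n : ℕ} (x : EuclideanSpace ℝ (Fin n)) (a m : ℕ) : ℝ :=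
  (∑ t ∈ Finset.range m, if h : a + t < n then x ⟨a + t, h⟩ else 0) / m

/-- The sliding window seminorm with weight function `ψ`. -/
def swNorm {n : ℕ} (ψ : ℕ → ℝ) (x : EuclideanSpace ℝ (Fin n)) : ℝ :=
  sSup {r | ∃ a m : ℕ, 1 ≤ m ∧ a + m ≤ n ∧ r = |wavg x a m| * ψ m}

/-!
By the identity `‖x - w‖² = ‖A_i x - w‖² + ‖A_i x - x‖² + (x_i - x_{i+1}) (w_{i+1} - w_i)`,
a pooling step lowers the squared distance to each `w` in the monotone cone `K` by at least the
square of its own length. So the iterates are Fejér monotone with respect to `K` and their step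
lengths tend to `0`. A cluster point `z` of the iterates at times divisible by `n - 1` is also a
limit of the iterates just after the pair `(i, i+1)` was sorted, for every `i`, hence `z ∈ K`, and
Fejér monotonicity makes `z` the limit of the whole sequence. Finally a pooling step does not change
the projection: if `x_i > x_{i+1}`, the projections of `x` and of `A_i x` both lie on the hyperplane
`v_i = v_{i+1}`, where `‖x - ·‖²` and `‖A_i x - ·‖²` differ by a constant. By continuity of the
projection, `z = iso z = iso x⁽⁰⁾`.
-/

open Topology
open scoped RealInnerProductSpace

section NearestPoint

variable {F : Type*} [NormedAddCommGroup F] [InnerProductSpace ℝ F] {K : Set F} {x y p q : F}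

theorem exists_isMinOn_dist (hne : K.Nonempty) (hc : IsComplete K) (hK : Convex ℝ K) (x : F) :
    ∃ p ∈ K, IsMinOn (dist x) K p := by
  obtain ⟨p, hp, hmin⟩ := exists_norm_eq_iInf_of_complete_convex hne hc hK x
  refine ⟨p, hp, isMinOn_iff.mpr fun w hw => ?_⟩
  rw [dist_eq_norm, dist_eq_norm, hmin]
  exact ciInf_le ⟨0, by rintro _ ⟨w', rfl⟩; positivity⟩ (⟨w, hw⟩ : K)

theorem inner_sub_le_zero_of_isMinOn_dist (hK : Convex ℝ K) (hp : p ∈ K)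
    (h : IsMinOn (dist x) K p) : ∀ w ∈ K, ⟪x - p, w - p⟫ ≤ 0 :=
  (norm_eq_iInf_iff_real_inner_le_zero hK hp).mp <| by
    simpa only [dist_eq_norm] using (h.iInf_eq hp).symm

theorem norm_sub_le_of_isMinOn_dist (hK : Convex ℝ K) (hp : p ∈ K) (hpx : IsMinOn (dist x) K p)
    (hq : q ∈ K) (hqy : IsMinOn (dist y) K q) : ‖p - q‖ ≤ ‖x - y‖ := by
  have hpq := inner_sub_le_zero_of_isMinOn_dist hK hp hpx q hq
  have hqp := inner_sub_le_zero_of_isMinOn_dist hK hq hqy p hp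
  have key : ‖p - q‖ ^ 2 ≤ ⟪x - y, p - q⟫ := by
    have e : ⟪x - y, p - q⟫ - ‖p - q‖ ^ 2 = -⟪x - p, q - p⟫ - ⟪y - q, p - q⟫ := by
      rw [← real_inner_self_eq_norm_sq]
      simp only [inner_sub_left, inner_sub_right, real_inner_comm]
      ring
    linarith
  nlinarith [real_inner_le_norm (x - y) (p - q), norm_nonneg (p - q), norm_nonneg (x - y)]

end NearestPoint

section MonoCone

variable {n : ℕ}

theorem zero_mem_monoCone : (0 : EuclideanSpace ℝ (Fin n)) ∈ monoCone n := fun _ _ _ => le_rfl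

theorem convex_monoCone : Convex ℝ (monoCone n) := by
  intro v hv w hw a b ha hb _ i j hij
  simp only [PiLp.add_apply, PiLp.smul_apply, smul_eq_mul]
  gcongr
  exacts [hv i j hij, hw i j hij]

theorem isClosed_monoCone : IsClosed (monoCone n) := by
  simp only [monoCone, Set.ofPred_forall]
  exact isClosed_iInter fun i => isClosed_iInter fun j => isClosed_iInter fun _ =>
    isClosed_le (PiLp.continuous_apply 2 _ i) (PiLp.continuous_apply 2 _ j)

theorem mem_monoCone_of_adjacent {z : EuclideanSpace ℝ (Fin n)}
    (hz : ∀ i (h : i + 1 < n), z ⟨i, by omega⟩ ≤ z ⟨i + 1, h⟩) : z ∈ monoCone n := by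
  intro j k hjk
  obtain _ | n := n
  · exact j.elim0
  · exact (Fin.monotone_iff_le_succ.mpr fun i => hz i (by omega)) hjk

theorem exists_isMinOn_dist_monoCone (x : EuclideanSpace ℝ (Fin n)) :
    ∃ z ∈ monoCone n, ∀ w ∈ monoCone n, dist x z ≤ dist x w := by
  simpa only [isMinOn_iff] using exists_isMinOn_dist ⟨0, zero_mem_monoCone⟩
    isClosed_monoCone.isComplete convex_monoCone x

theorem isoProj_mem (x : EuclideanSpace ℝ (Fin n)) : isoProj x ∈ monoCone n := by
  rw [isoProj, dif_pos (exists_isMinOn_dist_monoCone x)]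
  exact (exists_isMinOn_dist_monoCone x).choose_spec.1

theorem isMinOn_isoProj (x : EuclideanSpace ℝ (Fin n)) :
    IsMinOn (dist x) (monoCone n) (isoProj x) := by
  rw [isoProj, dif_pos (exists_isMinOn_dist_monoCone x)]
  exact isMinOn_iff.mpr (exists_isMinOn_dist_monoCone x).choose_spec.2

theorem isoProj_eq_of_isMinOn {x q : EuclideanSpace ℝ (Fin n)} (hq : q ∈ monoCone n)
    (h : IsMinOn (dist x) (monoCone n) q) : isoProj x = q := by
  have := norm_sub_le_of_isMinOn_dist convex_monoCone (isoProj_mem x) (isMinOn_isoProj x) hq h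
  rwa [sub_self, norm_zero, norm_le_zero_iff, sub_eq_zero] at this

theorem isoProj_eq_self {x : EuclideanSpace ℝ (Fin n)} (hx : x ∈ monoCone n) : isoProj x = x :=
  isoProj_eq_of_isMinOn hx (isMinOn_iff.mpr fun w _ => by simp)

theorem lipschitzWith_isoProj : LipschitzWith 1 (isoProj (n := n)) :=
  LipschitzWith.of_dist_le_mul fun x y => by
    simpa [dist_eq_norm] using norm_sub_le_of_isMinOn_dist convex_monoCone
      (isoProj_mem x) (isMinOn_isoProj x) (isoProj_mem y) (isMinOn_isoProj y)

end MonoCone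

section AdjacentAveraging

variable {n i : ℕ}

theorem avgMap_apply_left (h : i + 1 < n) (x : EuclideanSpace ℝ (Fin n)) :
    avgMap i x ⟨i, by omega⟩ = (x ⟨i, by omega⟩ + x ⟨i + 1, h⟩) / 2 := by
  simp [avgMap, h]

theorem avgMap_apply_right (h : i + 1 < n) (x : EuclideanSpace ℝ (Fin n)) :
    avgMap i x ⟨i + 1, h⟩ = (x ⟨i, by omega⟩ + x ⟨i + 1, h⟩) / 2 := by
  simp [avgMap, h]

theorem avgMap_apply_of_ne (x : EuclideanSpace ℝ (Fin n)) {j : Fin n} (hj : (j : ℕ) ≠ i)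
    (hj' : (j : ℕ) ≠ i + 1) : avgMap i x j = x j := by
  simp [avgMap, hj, hj']

theorem inner_avgMap_sub (h : i + 1 < n) (v x : EuclideanSpace ℝ (Fin n)) :
    ⟪v, avgMap i x - x⟫ =
      (x ⟨i, by omega⟩ - x ⟨i + 1, h⟩) / 2 * (v ⟨i + 1, h⟩ - v ⟨i, by omega⟩) := by
  rw [PiLp.inner_apply, Fintype.sum_eq_add ⟨i, by omega⟩ ⟨i + 1, h⟩ (by simp [Fin.ext_iff])]
  · simp only [PiLp.sub_apply, avgMap_apply_left h, avgMap_apply_right h, RCLike.inner_apply,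
      conj_trivial]
    ring
  · rintro j ⟨hj, hj'⟩
    rw [PiLp.sub_apply, avgMap_apply_of_ne x (by simpa [Fin.ext_iff] using hj)
      (by simpa [Fin.ext_iff] using hj'), sub_self, inner_zero_right]

theorem norm_sub_sq_eq_norm_avgMap_sub_sq (h : i + 1 < n) (x w : EuclideanSpace ℝ (Fin n)) :
    ‖x - w‖ ^ 2 = ‖avgMap i x - w‖ ^ 2 + ‖avgMap i x - x‖ ^ 2 +
      (x ⟨i, by omega⟩ - x ⟨i + 1, h⟩) * (w ⟨i + 1, h⟩ - w ⟨i, by omega⟩) := by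
  rw [show x - w = (avgMap i x - w) - (avgMap i x - x) by abel, norm_sub_sq_real,
    inner_avgMap_sub h]
  simp only [PiLp.sub_apply, avgMap_apply_left h, avgMap_apply_right h]
  ring

theorem avgMap_mem_monoCone (h : i + 1 < n) {p : EuclideanSpace ℝ (Fin n)}
    (hp : p ∈ monoCone n) : avgMap i p ∈ monoCone n := by
  intro j k hjk
  rw [Fin.le_def] at hjk
  have hi := hp ⟨i, by omega⟩ ⟨i + 1, h⟩ (Fin.mk_le_mk.mpr (by omega))
  simp only [avgMap, dif_pos h, PiLp.toLp_apply]
  split_ifs with hj hk hk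
  · exact le_rfl
  · linarith [hp ⟨i + 1, h⟩ k (show i + 1 ≤ (k : ℕ) by omega)]
  · linarith [hp j ⟨i, by omega⟩ (show (j : ℕ) ≤ i by omega)]
  · exact hp j k hjk

theorem isoStep_apply_le (h : i + 1 < n) (x : EuclideanSpace ℝ (Fin n)) :
    isoStep i x ⟨i, by omega⟩ ≤ isoStep i x ⟨i + 1, h⟩ := by
  rw [isoStep, dif_pos h]
  split_ifs with hx
  · exact hx
  · rw [avgMap_apply_left h, avgMap_apply_right h]

theorem norm_isoStep_sub_sq_add_le (i : ℕ) (x : EuclideanSpace ℝ (Fin n))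
    {w : EuclideanSpace ℝ (Fin n)} (hw : w ∈ monoCone n) :
    ‖isoStep i x - w‖ ^ 2 + ‖isoStep i x - x‖ ^ 2 ≤ ‖x - w‖ ^ 2 := by
  unfold isoStep
  split_ifs with h hx
  · simp
  · have hw' := hw ⟨i, by omega⟩ ⟨i + 1, h⟩ (Fin.mk_le_mk.mpr (by omega))
    have := mul_nonneg (sub_nonneg.mpr (not_le.mp hx).le) (sub_nonneg.mpr hw')
    linarith [norm_sub_sq_eq_norm_avgMap_sub_sq h x w]
  · simp

theorem isoProj_apply_eq_of_le (h : i + 1 < n) {x : EuclideanSpace ℝ (Fin n)}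
    (hx : x ⟨i + 1, h⟩ ≤ x ⟨i, by omega⟩) :
    isoProj x ⟨i, by omega⟩ = isoProj x ⟨i + 1, h⟩ := by
  have hp := isoProj_mem x
  have hle := hp ⟨i, by omega⟩ ⟨i + 1, h⟩ (Fin.mk_le_mk.mpr (by omega))
  have hvi := inner_sub_le_zero_of_isMinOn_dist convex_monoCone hp (isMinOn_isoProj x) _
    (avgMap_mem_monoCone h hp)
  rw [inner_avgMap_sub h] at hvi
  simp only [PiLp.sub_apply] at hvi
  -- with `d = p_{i+1} - p_i ≥ 0`, `hvi` reads `d (x_i - x_{i+1} + d) ≤ 0`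
  nlinarith

theorem isoProj_isoStep (i : ℕ) (x : EuclideanSpace ℝ (Fin n)) :
    isoProj (isoStep i x) = isoProj x := by
  rw [isoStep]
  split_ifs with h hx
  · rfl
  · set y := avgMap i x
    have hy : y ⟨i + 1, h⟩ ≤ y ⟨i, by omega⟩ := by
      rw [avgMap_apply_left h, avgMap_apply_right h]
    have hshift : ∀ z : EuclideanSpace ℝ (Fin n), z ⟨i, by omega⟩ = z ⟨i + 1, h⟩ →
        ‖x - z‖ ^ 2 = ‖y - z‖ ^ 2 + ‖y - x‖ ^ 2 := fun z hz => by
      rw [norm_sub_sq_eq_norm_avgMap_sub_sq h x z, hz, sub_self, mul_zero, add_zero]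
    set p := isoProj x
    set q := isoProj y
    have hpq : dist x p ^ 2 ≤ dist x q ^ 2 :=
      pow_le_pow_left₀ dist_nonneg ((isMinOn_isoProj x) (isoProj_mem y)) 2
    have hyp : dist y p ≤ dist y q := by
      rw [dist_eq_norm, dist_eq_norm] at hpq ⊢
      rw [hshift p (isoProj_apply_eq_of_le h (not_le.mp hx).le),
        hshift q (isoProj_apply_eq_of_le h hy)] at hpq
      exact le_of_pow_le_pow_left₀ two_ne_zero (norm_nonneg _) (by linarith)
    exact isoProj_eq_of_isMinOn (isoProj_mem x)
      (isMinOn_iff.mpr fun w hw => hyp.trans ((isMinOn_isoProj y) hw))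
  · rfl

end AdjacentAveraging

section FejerSequences

theorem tendsto_dist_add_of_tendsto_dist_succ {X : Type*} [PseudoMetricSpace X] {u : ℕ → X}
    (h : Tendsto (fun t => dist (u t) (u (t + 1))) atTop (𝓝 0)) (j : ℕ) :
    Tendsto (fun t => dist (u t) (u (t + j))) atTop (𝓝 0) := by
  induction j with
  | zero => simp
  | succ j ih =>
    refine squeeze_zero (fun _ => dist_nonneg) (fun t => dist_triangle _ (u (t + j)) _) ?_
    simpa [add_assoc] using ih.add (h.comp (tendsto_add_atTop_nat j))

theorem tendsto_of_antitone_dist {X : Type*} [PseudoMetricSpace X] {u : ℕ → X} {z : X}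
    (hu : Antitone fun t => dist (u t) z) {ψ : ℕ → ℕ} (hψ : Tendsto ψ atTop atTop)
    (hz : Tendsto (u ∘ ψ) atTop (𝓝 z)) : Tendsto u atTop (𝓝 z) := by
  have hinf := tendsto_atTop_ciInf hu ⟨0, by rintro _ ⟨t, rfl⟩; exact dist_nonneg⟩
  have h0 : ⨅ t, dist (u t) z = 0 :=
    tendsto_nhds_unique (hinf.comp hψ) (tendsto_iff_dist_tendsto_zero.mp hz)
  exact tendsto_iff_dist_tendsto_zero.mpr (h0 ▸ hinf)

variable {E : Type*} [SeminormedAddCommGroup E] {u : ℕ → E} {w : E}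

theorem antitone_dist_of_norm_sub_sq_add_le
    (h : ∀ t, ‖u (t + 1) - w‖ ^ 2 + ‖u (t + 1) - u t‖ ^ 2 ≤ ‖u t - w‖ ^ 2) :
    Antitone fun t => dist (u t) w :=
  antitone_nat_of_succ_le fun t => by
    rw [dist_eq_norm, dist_eq_norm]
    exact le_of_pow_le_pow_left₀ two_ne_zero (norm_nonneg _)
      (by linarith [h t, sq_nonneg ‖u (t + 1) - u t‖])

theorem tendsto_dist_succ_of_norm_sub_sq_add_le
    (h : ∀ t, ‖u (t + 1) - w‖ ^ 2 + ‖u (t + 1) - u t‖ ^ 2 ≤ ‖u t - w‖ ^ 2) :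
    Tendsto (fun t => dist (u t) (u (t + 1))) atTop (𝓝 0) := by
  set a := fun t => ‖u t - w‖ ^ 2
  have ha : Antitone a := antitone_nat_of_succ_le fun t => by
    linarith [h t, sq_nonneg ‖u (t + 1) - u t‖]
  have hinf := tendsto_atTop_ciInf ha ⟨0, by rintro _ ⟨t, rfl⟩; positivity⟩
  have hdiff : Tendsto (fun t => a t - a (t + 1)) atTop (𝓝 0) := by
    simpa using hinf.sub (hinf.comp (tendsto_add_atTop_nat 1))
  refine squeeze_zero (fun _ => dist_nonneg) (fun t => ?_) (by simpa using hdiff.sqrt)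
  rw [dist_eq_norm, norm_sub_rev]
  exact Real.le_sqrt_of_sq_le (by linarith [h t])

end FejerSequences

theorem mem_monoCone_of_isoStep_cyclic {n : ℕ} {seq : ℕ → EuclideanSpace ℝ (Fin n)}
    (hstep : ∀ t : ℕ, seq (t + 1) = isoStep (t % (n - 1)) (seq t))
    (hsteps : Tendsto (fun t => dist (seq t) (seq (t + 1))) atTop (𝓝 0))
    {ψ : ℕ → ℕ} (hψ : Tendsto ψ atTop atTop) {z : EuclideanSpace ℝ (Fin n)}
    (hz : Tendsto (fun k => seq ((n - 1) * ψ k)) atTop (𝓝 z)) : z ∈ monoCone n := by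
  refine mem_monoCone_of_adjacent fun i h => ?_
  have hmul : Tendsto (fun k => (n - 1) * ψ k) atTop atTop :=
    tendsto_atTop_mono (fun k => Nat.le_mul_of_pos_left (ψ k) (by omega)) hψ
  have hlim : Tendsto (fun k => seq ((n - 1) * ψ k + i + 1)) atTop (𝓝 z) :=
    hz.congr_dist ((tendsto_dist_add_of_tendsto_dist_succ hsteps (i + 1)).comp hmul)
  have hsorted : ∀ k, seq ((n - 1) * ψ k + i + 1) ⟨i, by omega⟩ ≤
      seq ((n - 1) * ψ k + i + 1) ⟨i + 1, h⟩ := fun k => by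
    rw [hstep, Nat.mul_add_mod, Nat.mod_eq_of_lt (by omega)]
    exact isoStep_apply_le h _
  have hcoord (j : Fin n) : Tendsto (fun k => seq ((n - 1) * ψ k + i + 1) j) atTop (𝓝 (z j)) :=
    ((PiLp.continuous_apply 2 _ j).tendsto z).comp hlim
  exact le_of_tendsto_of_tendsto' (hcoord _) (hcoord _) hsorted

theorem stmt6 (n : ℕ) (hn : 2 ≤ n) (x0 : EuclideanSpace ℝ (Fin n))
    (seq : ℕ → EuclideanSpace ℝ (Fin n)) (h0 : seq 0 = x0)
    (hstep : ∀ t : ℕ, seq (t + 1) = isoStep (t % (n - 1)) (seq t)) :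
    Tendsto seq atTop (nhds (isoProj x0)) := by
  have hfejer : ∀ w ∈ monoCone n, ∀ t,
      ‖seq (t + 1) - w‖ ^ 2 + ‖seq (t + 1) - seq t‖ ^ 2 ≤ ‖seq t - w‖ ^ 2 :=
    fun w hw t => hstep t ▸ norm_isoStep_sub_sq_add_le _ _ hw
  have hbdd : ∀ k, seq ((n - 1) * k) ∈ Metric.closedBall 0 (dist (seq 0) 0) := fun k =>
    antitone_dist_of_norm_sub_sq_add_le (hfejer 0 zero_mem_monoCone) (Nat.zero_le _)
  obtain ⟨z, -, ψ, hψ, hz⟩ := (isCompact_closedBall _ _).tendsto_subseq hbdd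
  have hzK : z ∈ monoCone n := mem_monoCone_of_isoStep_cyclic hstep
    (tendsto_dist_succ_of_norm_sub_sq_add_le (hfejer 0 zero_mem_monoCone)) hψ.tendsto_atTop hz
  have hlim : Tendsto seq atTop (𝓝 z) :=
    tendsto_of_antitone_dist (antitone_dist_of_norm_sub_sq_add_le (hfejer z hzK))
      (tendsto_atTop_mono (fun k => Nat.le_mul_of_pos_left (ψ k) (by omega)) hψ.tendsto_atTop) hz
  have hinv : ∀ t, isoProj (seq t) = isoProj x0 := fun t => by
    induction t with
    | zero => rw [h0]
    | succ t ih => rw [hstep, isoProj_isoStep, ih]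
  have hz0 : isoProj z = isoProj x0 :=
    tendsto_nhds_unique ((lipschitzWith_isoProj.continuous.tendsto z).comp hlim)
      (by simp only [Function.comp_def, hinv, tendsto_const_nhds])
  rwa [← hz0, isoProj_eq_self hzK]
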